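/- arXiv:1107.3473 — 3 statements merged into one kernel-verified Lean document; each statement's English description precedes it below -/
import Mathlib

section
/- If a sequence a(n) satisfies a linear recurrence with constant coefficients of order L1 and b(n) satisfies one of order L2, then the pointwise (Hadamard) product a(n)·b(n) satisfies a linear recurrence with constant coefficients of order at most L1·L2. -/
/-!
The shifts `n ↦ u (n + k)` of a solution `u` of an order-`L` recurrence are again solutions, so
they lie in its `L`-dimensional solution space. Hence every shift of `a * b` lies in the product
of the two solution spaces, the image of their tensor product under multiplication, of dimension
at most `L1 * L2`. Among the first `L1 * L2 + 1` shifts of `a * b` one is therefore a combination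
of the preceding ones, and that linear relation is a recurrence of order at most `L1 * L2`.
-/

open Module Submodule

section

variable {K A : Type*} [Field K] [Ring A] [Algebra K A] (M N : Submodule K A)
  [Module.Finite K M] [Module.Finite K N]

instance Submodule.finite_mul : Module.Finite K ↥(M * N) := by
  rw [← mulMap_range]
  infer_instance

theorem Submodule.finrank_mul_le : finrank K ↥(M * N) ≤ finrank K M * finrank K N := by
  rw [← mulMap_range, ← finrank_tensorProduct]
  exact LinearMap.finrank_range_le _

end

section

variable {K V : Type*} [Field K] [AddCommGroup V] [Module K V]

theorem linearIndependent_fin_of_forall_notMem_span {v : ℕ → V} {m : ℕ}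
    (hv : ∀ k < m, v k ∉ span K (Set.range fun i : Fin k => v i)) :
    LinearIndependent K fun i : Fin m => v i := by
  induction m with
  | zero => exact linearIndependent_empty_type
  | succ m ih =>
    exact linearIndependent_finSucc'.2
      ⟨ih fun k hk => hv k (Nat.lt_succ_of_lt hk), hv m (Nat.lt_succ_self m)⟩

theorem exists_le_finrank_mem_span_of_forall_mem (W : Submodule K V) [FiniteDimensional K W]
    {v : ℕ → V} (hv : ∀ k, v k ∈ W) :
    ∃ k ≤ finrank K W, v k ∈ span K (Set.range fun i : Fin k => v i) := by
  by_contra! h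
  have hind : LinearIndependent K fun i : Fin (finrank K W + 1) => v i :=
    linearIndependent_fin_of_forall_notMem_span fun k hk => h k (Nat.le_of_lt_succ hk)
  have hle : span K (Set.range fun i : Fin (finrank K W + 1) => v i) ≤ W :=
    span_le.2 (Set.range_subset_iff.2 fun i => hv i)
  have := Submodule.finrank_mono hle
  rw [finrank_span_eq_card hind, Fintype.card_fin] at this
  omega

end

namespace LinearRecurrence

-- `IsSolution` looks forward from `n`, the recurrences of the theorem look back from `n`.
theorem isSolution_iff_forall_ge {R : Type*} [CommSemiring R] (E : LinearRecurrence R)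
    (u : ℕ → R) :
    E.IsSolution u ↔
      ∀ n ≥ E.order, u n = ∑ i : Fin E.order, E.coeffs i.rev * u (n - ((i : ℕ) + 1)) := by
  have reindex : ∀ n, ∑ i : Fin E.order, E.coeffs i * u (n + i) =
      ∑ i : Fin E.order, E.coeffs i.rev * u (n + E.order - ((i : ℕ) + 1)) := by
    intro n
    rw [← Equiv.sum_comp Fin.revPerm]
    refine Finset.sum_congr rfl fun i _ => ?_
    simp only [Fin.revPerm_apply, Fin.val_rev]
    congr 2
    omega
  constructor
  · intro h n hn
    obtain ⟨m, rfl⟩ := Nat.exists_eq_add_of_le' hn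
    rw [h m, reindex]
  · intro h n
    rw [h (n + E.order) (Nat.le_add_left _ _), reindex]

theorem IsSolution.shift {R : Type*} [CommSemiring R] {E : LinearRecurrence R} {u : ℕ → R}
    (hu : E.IsSolution u) (k : ℕ) : E.IsSolution fun n => u (n + k) := fun n => by
  simpa only [Nat.add_right_comm _ k] using hu (n + k)

instance finite_solSpace {R : Type*} [CommRing R] (E : LinearRecurrence R) :
    Module.Finite R E.solSpace :=
  Module.Finite.of_basis E.basis

theorem finrank_solSpace {R : Type*} [CommRing R] [StrongRankCondition R]
    (E : LinearRecurrence R) : finrank R E.solSpace = E.order := by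
  simp [finrank_eq_card_basis E.basis]

theorem exists_isSolution_of_forall_shift_mem {K : Type*} [Field K] {u : ℕ → K}
    (W : Submodule K (ℕ → K)) [FiniteDimensional K W] (hu : ∀ k, (fun n => u (n + k)) ∈ W) :
    ∃ E : LinearRecurrence K, E.order ≤ finrank K W ∧ E.IsSolution u := by
  obtain ⟨k, hk, hspan⟩ := exists_le_finrank_mem_span_of_forall_mem W hu
  obtain ⟨e, he⟩ := (mem_span_range_iff_exists_fun K).1 hspan
  refine ⟨⟨k, e⟩, hk, fun n => ?_⟩
  simpa using (congrFun he n).symm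

end LinearRecurrence

theorem cfinite_mul (a b : ℕ → ℂ) (L1 L2 : ℕ) (c : Fin L1 → ℂ) (d : Fin L2 → ℂ)
    (ha : ∀ n ≥ L1, a n = ∑ i : Fin L1, c i * a (n - ((i : ℕ) + 1)))
    (hb : ∀ n ≥ L2, b n = ∑ j : Fin L2, d j * b (n - ((j : ℕ) + 1))) :
    ∃ L ≤ L1 * L2, ∃ e : Fin L → ℂ,
      ∀ n ≥ L, a n * b n = ∑ i : Fin L, e i * (a (n - ((i : ℕ) + 1)) * b (n - ((i : ℕ) + 1))) := by
  let Ea : LinearRecurrence ℂ := ⟨L1, fun i => c i.rev⟩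
  let Eb : LinearRecurrence ℂ := ⟨L2, fun j => d j.rev⟩
  have hsola : Ea.IsSolution a := (Ea.isSolution_iff_forall_ge a).2 (by simpa [Ea] using ha)
  have hsolb : Eb.IsSolution b := (Eb.isSolution_iff_forall_ge b).2 (by simpa [Eb] using hb)
  have hshift : ∀ k, (fun n => (a * b) (n + k)) ∈ Ea.solSpace * Eb.solSpace := fun k =>
    mul_mem_mul ((Ea.is_sol_iff_mem_solSpace _).1 (hsola.shift k))
      ((Eb.is_sol_iff_mem_solSpace _).1 (hsolb.shift k))
  obtain ⟨E, hE, hsol⟩ := LinearRecurrence.exists_isSolution_of_forall_shift_mem _ hshift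
  have horder : E.order ≤ L1 * L2 := hE.trans <| (finrank_mul_le _ _).trans_eq <| by
    simp only [LinearRecurrence.finrank_solSpace, Ea, Eb]
  exact ⟨E.order, horder, fun i => E.coeffs i.rev, (E.isSolution_iff_forall_ge _).1 hsol⟩
end

section
/- The generating function identity ∑_{n≥0} U_n(a) U_n(b) t^n = (1−t²)/(1 − 4abt − (2 − 4a² − 4b²)t² − 4abt³ + t⁴) holds as an identity of formal power series in t with coefficients polynomials in a and b, where U_n are the Chebyshev polynomials of the second kind. -/
/-!
Writing `x = (α + α⁻¹) / 2` and `y = (β + β⁻¹) / 2`, the product `U_n(x) U_n(y)` is a combination of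
the geometric sequences with ratios `(αβ)^{±1}` and `(α/β)^{±1}`, and the quartic in the statement
is `(1 - αβ t)(1 - t/(αβ))(1 - (α/β) t)(1 - (β/α) t)`. Hence the quartic kills every coefficient of
index `≥ 4` of the generating function, and the four remaining coefficients are those of `1 - t²`.
-/

def chebU {R : Type*} [CommRing R] (x : R) : ℕ → R
  | 0 => 1
  | 1 => 2 * x
  | (n + 2) => 2 * x * chebU x (n + 1) - chebU x n

section

open PowerSeries

variable {R : Type*} [CommRing R]

theorem chebU_add_two (x : R) (n : ℕ) :
    chebU x (n + 2) = 2 * x * chebU x (n + 1) - chebU x n := rfl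

theorem chebU_mul_chebU_add_four (x y : R) (n : ℕ) :
    chebU x (n + 4) * chebU y (n + 4) =
      4 * x * y * (chebU x (n + 3) * chebU y (n + 3))
        + (2 - 4 * x ^ 2 - 4 * y ^ 2) * (chebU x (n + 2) * chebU y (n + 2))
        + 4 * x * y * (chebU x (n + 1) * chebU y (n + 1)) - chebU x n * chebU y n := by
  simp only [chebU_add_two]
  ring

theorem coeff_add_four_quartic_mul_mk (c₁ c₂ c₃ : R) (f : ℕ → R) (n : ℕ) :
    coeff (n + 4) ((1 - C c₁ * X - C c₂ * X ^ 2 - C c₃ * X ^ 3 + X ^ 4) * mk f) =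
      f (n + 4) - c₁ * f (n + 3) - c₂ * f (n + 2) - c₃ * f (n + 1) + f n := by
  simp only [sub_mul, add_mul, one_mul, mul_assoc, map_sub, map_add, coeff_C_mul,
    coeff_succ_X_mul, coeff_X_pow_mul', coeff_mk]
  simp

theorem chebU_mul_chebU_gf (x y : R) :
    (1 - C (4 * x * y) * X - C (2 - 4 * x ^ 2 - 4 * y ^ 2) * X ^ 2
        - C (4 * x * y) * X ^ 3 + X ^ 4)
      * mk (fun n => chebU x n * chebU y n) = 1 - X ^ 2 := by
  ext n
  rcases n with _ | _ | _ | _ | n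
  iterate 4
    simp only [sub_mul, add_mul, one_mul, mul_assoc, map_sub, map_add, coeff_C_mul,
      coeff_succ_X_mul, coeff_zero_X_mul, coeff_X_pow_mul', coeff_mk, coeff_one, coeff_X_pow]
    norm_num [chebU] <;> ring
  rw [coeff_add_four_quartic_mul_mk, chebU_mul_chebU_add_four, map_sub, coeff_one, coeff_X_pow,
    if_neg (by omega), if_neg (by omega)]
  ring

end

open PowerSeries in
theorem shapiro_chebU_gf :
    let R := MvPolynomial (Fin 2) ℂ
    let a : R := MvPolynomial.X 0
    let b : R := MvPolynomial.X 1
    (1 - C (4 * a * b) * X - C (2 - 4 * a ^ 2 - 4 * b ^ 2) * X ^ 2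
        - C (4 * a * b) * X ^ 3 + X ^ 4)
      * PowerSeries.mk (fun n => chebU a n * chebU b n)
      = 1 - X ^ 2 :=
  chebU_mul_chebU_gf _ _
end

section
/- If sequences a and b satisfy linear recurrences with constant coefficients of orders L1 and L2 respectively, and a(n) = b(n) for all n < L1 + L2, then a(n) = b(n) for all n. (Equality of C-finite sequences is decidable from finitely many terms.) -/
/-!
A sequence solves a linear recurrence exactly when the recurrence's characteristic polynomial,
acting on sequences through the shift operator, annihilates it. The product of the characteristic
polynomials of `a` and `b` is monic of degree `L1 + L2` and annihilates both sequences, so `a` and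
`b` solve a common recurrence of order `L1 + L2` and are determined by their first `L1 + L2` terms.
-/

open Polynomial Finset

namespace LinearRecurrence

variable {R : Type*} [CommRing R]

def shift : Module.End R (ℕ → R) := LinearMap.funLeft R R Nat.succ

theorem shift_pow_apply (k : ℕ) (u : ℕ → R) (n : ℕ) : (shift ^ k) u n = u (n + k) := by
  induction k generalizing n with
  | zero => rfl
  | succ k ih =>
    rw [pow_succ', Module.End.mul_apply]
    exact (ih (n + 1)).trans (congrArg u (by omega))

theorem aeval_shift_monomial_apply (k : ℕ) (r : R) (u : ℕ → R) (n : ℕ) :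
    aeval shift (monomial k r) u n = r * u (n + k) := by
  simp [aeval_monomial, shift_pow_apply]

theorem isSolution_iff_aeval_charPoly (E : LinearRecurrence R) (u : ℕ → R) :
    E.IsSolution u ↔ aeval shift E.charPoly u = 0 := by
  simp only [funext_iff, charPoly, map_sub, map_sum, LinearMap.sub_apply, LinearMap.coe_sum,
    Finset.sum_apply, aeval_shift_monomial_apply, one_mul, sub_eq_zero]
  rfl

/-- The coefficients are negated so that `(ofPoly p).charPoly = p` for monic `p`. -/
def ofPoly (p : R[X]) : LinearRecurrence R := ⟨p.natDegree, fun i => -p.coeff i⟩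

theorem charPoly_ofPoly {p : R[X]} (hp : p.Monic) : (ofPoly p).charPoly = p := by
  conv_rhs => rw [hp.as_sum]
  simp only [charPoly, ofPoly, ← C_mul_X_pow_eq_monomial, map_one, one_mul, map_neg,
    sum_neg_distrib, sub_neg_eq_add]
  exact congrArg (X ^ p.natDegree + ·)
    (Fin.sum_univ_eq_sum_range (fun i => C (p.coeff i) * X ^ i) _)

noncomputable def mul (E₁ E₂ : LinearRecurrence R) : LinearRecurrence R :=
  ofPoly (E₁.charPoly * E₂.charPoly)

theorem order_mul [Nontrivial R] (E₁ E₂ : LinearRecurrence R) :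
    (E₁.mul E₂).order = E₁.order + E₂.order := by
  rw [mul, ofPoly, E₁.charPoly_monic.natDegree_mul E₂.charPoly_monic,
    natDegree_eq_of_degree_eq_some E₁.charPoly_degree_eq_order,
    natDegree_eq_of_degree_eq_some E₂.charPoly_degree_eq_order]

theorem isSolution_mul_of_right (E₁ : LinearRecurrence R) {E₂ : LinearRecurrence R}
    {u : ℕ → R} (hu : E₂.IsSolution u) : (E₁.mul E₂).IsSolution u := by
  rw [isSolution_iff_aeval_charPoly, mul,
    charPoly_ofPoly (E₁.charPoly_monic.mul E₂.charPoly_monic),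
    aeval_mul, Module.End.mul_apply, (isSolution_iff_aeval_charPoly E₂ u).1 hu, map_zero]

theorem isSolution_mul_of_left {E₁ : LinearRecurrence R} (E₂ : LinearRecurrence R)
    {u : ℕ → R} (hu : E₁.IsSolution u) : (E₁.mul E₂).IsSolution u := by
  rw [isSolution_iff_aeval_charPoly, mul,
    charPoly_ofPoly (E₁.charPoly_monic.mul E₂.charPoly_monic),
    mul_comm, aeval_mul, Module.End.mul_apply, (isSolution_iff_aeval_charPoly E₁ u).1 hu,
    map_zero]

/-- The recurrence is stated with `c i` weighting `u (n - (i + 1))`; `LinearRecurrence` indexes its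
coefficients from the oldest term, hence the reversal. -/
theorem isSolution_mk_comp_rev {L : ℕ} {c : Fin L → R} {u : ℕ → R}
    (hu : ∀ n ≥ L, u n = ∑ i : Fin L, c i * u (n - ((i : ℕ) + 1))) :
    (⟨L, c ∘ Fin.rev⟩ : LinearRecurrence R).IsSolution u := by
  intro n
  rw [hu (n + L) (Nat.le_add_left L n), ← Equiv.sum_comp Fin.revPerm]
  refine sum_congr rfl fun i _ => ?_
  simp only [Fin.revPerm_apply, Function.comp_apply, Fin.val_rev]
  congr 2
  omega

end LinearRecurrence

theorem cfinite_equality_decidable (a b : ℕ → ℂ) (L1 L2 : ℕ)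
    (c : Fin L1 → ℂ) (d : Fin L2 → ℂ)
    (ha : ∀ n ≥ L1, a n = ∑ i : Fin L1, c i * a (n - ((i : ℕ) + 1)))
    (hb : ∀ n ≥ L2, b n = ∑ j : Fin L2, d j * b (n - ((j : ℕ) + 1)))
    (hinit : ∀ n < L1 + L2, a n = b n) :
    ∀ n, a n = b n := by
  set E : LinearRecurrence ℂ := .mul ⟨L1, c ∘ Fin.rev⟩ ⟨L2, d ∘ Fin.rev⟩
  have hE : E.order = L1 + L2 := LinearRecurrence.order_mul _ _
  have haE : E.IsSolution a :=
    LinearRecurrence.isSolution_mul_of_left _ (LinearRecurrence.isSolution_mk_comp_rev ha)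
  have hbE : E.IsSolution b :=
    LinearRecurrence.isSolution_mul_of_right _ (LinearRecurrence.isSolution_mk_comp_rev hb)
  have hab : a = b := by
    refine (E.eq_iff_eqOn_range_order a b haE hbE).2 fun n hn => hinit n ?_
    simpa [hE] using hn
  exact congrFun hab
end
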